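/- arXiv:1704.07654 — 2 statements merged into one kernel-verified Lean document; each statement's English description precedes it below -/
import Mathlib

section
/- Let X be a sober, finite-dimensional topological space of dimension d. Then there exists a closed point x ∈ X such that every open neighbourhood of x has dimension at least d; i.e., the local dimension of X at x equals dim X. -/
/-!
Take a chain `Z₀ < Z₁ < ⋯ < Z_d` of irreducible closed sets of maximal length. Its bottom `Z₀`
is a minimal irreducible closed set, so every `y ∈ Z₀` has `closure {y} = Z₀`, and the
T₀ axiom makes `Z₀ = {x}` a closed point. An open `U ∋ x` meets every `Zᵢ`, and
`Zᵢ ↦ Zᵢ ∩ U` identifies the irreducible closed sets of `X` meeting `U` with those of `U`,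
so the chain survives in `U` and `dim U ≥ d`.
-/

open TopologicalSpace Order

/-- The local dimension of a topological space at a point: the infimum over open
neighbourhoods `U` of `x` of the Krull dimension of `U`. -/
noncomputable def localDim (X : Type*) [TopologicalSpace X] (x : X) : WithBot ℕ∞ :=
  ⨅ U : {U : Set X // IsOpen U ∧ x ∈ U}, topologicalKrullDim ↥U.1

lemma Order.exists_isMin_coheight_eq_of_krullDim_eq {α : Type*} [Preorder α] {n : ℕ}
    (h : krullDim α = n) : ∃ a : α, IsMin a ∧ coheight a = n := by
  obtain ⟨p, hp⟩ := le_krullDim_iff.mp h.ge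
  have hcoheight : coheight p.head = n := by
    refine le_antisymm ?_ (hp ▸ length_le_coheight_head)
    exact_mod_cast h ▸ coheight_le_krullDim p.head
  refine ⟨p.head, isMin_iff_forall_not_lt.mpr fun b hlt => ?_, hcoheight⟩
  have hb : coheight b ≤ n := by exact_mod_cast h ▸ coheight_le_krullDim b
  have := hcoheight ▸ (coheight_add_one_le hlt).trans hb
  norm_cast at this
  omega

namespace TopologicalSpace.IrreducibleCloseds

variable {X : Type*} [TopologicalSpace X]

lemma exists_eq_singleton_of_isMin [T0Space X] {Z : IrreducibleCloseds X} (hZ : IsMin Z) :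
    ∃ x, (Z : Set X) = {x} := by
  have closure_eq : ∀ y ∈ (Z : Set X), closure {y} = (Z : Set X) := fun y hy => by
    let W : IrreducibleCloseds X :=
      ⟨closure {y}, isIrreducible_singleton.closure, isClosed_closure⟩
    have hWZ : W ≤ Z := Z.isClosed.closure_subset_iff.mpr (Set.singleton_subset_iff.mpr hy)
    exact congrArg SetLike.coe (hZ.eq_of_le hWZ)
  obtain ⟨x, hx⟩ := Z.isIrreducible.nonempty
  refine ⟨x, Set.eq_singleton_iff_unique_mem.mpr ⟨hx, fun y hy => ?_⟩⟩
  exact (inseparable_iff_closure_eq.mpr ((closure_eq y hy).trans (closure_eq x hx).symm)).eq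

lemma coheight_le_topologicalKrullDim_of_isOpen {U : Set X} (hU : IsOpen U)
    {Z : IrreducibleCloseds X} (hZU : ((Z : Set X) ∩ U).Nonempty) :
    coheight Z ≤ topologicalKrullDim U := by
  let e := orderIsoOfIsOpenEmbedding _ hU.isOpenEmbedding_subtypeVal
  have hZ : (Subtype.val ⁻¹' (Z : Set X) : Set U).Nonempty := by
    obtain ⟨x, hxZ, hxU⟩ := hZU
    exact ⟨⟨x, hxU⟩, hxZ⟩
  have hmap : map Subtype.val continuous_subtype_val (e.symm ⟨Z, hZ⟩) = Z :=
    congrArg Subtype.val (e.apply_symm_apply ⟨Z, hZ⟩)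
  rw [← hmap, hU.isOpenEmbedding_subtypeVal.coheight_map]
  exact coheight_le_krullDim _

end TopologicalSpace.IrreducibleCloseds

lemma localDim_le_topologicalKrullDim {X : Type*} [TopologicalSpace X] (x : X) :
    localDim X x ≤ topologicalKrullDim X :=
  (iInf_le _ ⟨Set.univ, isOpen_univ, Set.mem_univ x⟩).trans
    (topologicalKrullDim_subspace_le X Set.univ)

theorem sober_exists_closed_point_localDim_eq_dim_general (X : Type*) [TopologicalSpace X]
    [T0Space X] (d : ℕ)
    (hd : topologicalKrullDim X = (d : WithBot ℕ∞)) :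
    ∃ x : X, IsClosed ({x} : Set X) ∧
      (∀ U : Set X, IsOpen U → x ∈ U → (d : WithBot ℕ∞) ≤ topologicalKrullDim ↥U) ∧
      localDim X x = (d : WithBot ℕ∞) := by
  obtain ⟨Z, hZmin, hZd⟩ := exists_isMin_coheight_eq_of_krullDim_eq hd
  obtain ⟨x, hZx⟩ := IrreducibleCloseds.exists_eq_singleton_of_isMin hZmin
  have le_dim_nhds : ∀ U : Set X, IsOpen U → x ∈ U → (d : WithBot ℕ∞) ≤ topologicalKrullDim U :=
    fun U hU hxU => by
      have hZU : ((Z : Set X) ∩ U).Nonempty := ⟨x, by rw [hZx]; rfl, hxU⟩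
      exact_mod_cast hZd ▸ IrreducibleCloseds.coheight_le_topologicalKrullDim_of_isOpen hU hZU
  refine ⟨x, hZx ▸ Z.isClosed, le_dim_nhds, le_antisymm ?_ ?_⟩
  · exact hd ▸ localDim_le_topologicalKrullDim x
  · exact le_iInf fun U => le_dim_nhds U.1 U.2.1 U.2.2

theorem sober_exists_closed_point_localDim_eq_dim (X : Type*) [TopologicalSpace X]
    [QuasiSober X] [T0Space X] (d : ℕ)
    (hd : topologicalKrullDim X = (d : WithBot ℕ∞)) :
    ∃ x : X, IsClosed ({x} : Set X) ∧
      (∀ U : Set X, IsOpen U → x ∈ U → (d : WithBot ℕ∞) ≤ topologicalKrullDim ↥U) ∧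
      localDim X x = (d : WithBot ℕ∞) :=
  sober_exists_closed_point_localDim_eq_dim_general X d hd
end

section
/- Let X be an irreducible, equicodimensional, finite-dimensional topological space satisfying the equivalent catenary conditions (all maximal chains of irreducible closed subsets have the same length). Then every irreducible closed subset Y of X is also equicodimensional, with codim(Y_0, Y) = dim Y for every minimal irreducible closed subset Y_0 of Y. -/
open TopologicalSpace Order
/-- A chain of irreducible closed subsets is saturated (maximal with given endpoints)
if each step is a covering relation. -/
def IsSaturatedChain {X : Type*} [TopologicalSpace X]
    (p : LTSeries (IrreducibleCloseds X)) : Prop :=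
  ∀ i : Fin p.length, p.toFun i.castSucc ⋖ p.toFun i.succ

/-- A topological space is catenary if any two saturated chains of irreducible closed
subsets with the same endpoints have the same length. -/
def IsCatenarySpace (X : Type*) [TopologicalSpace X] : Prop :=
  ∀ p q : LTSeries (IrreducibleCloseds X), p.head = q.head → p.last = q.last →
    IsSaturatedChain p → IsSaturatedChain q → p.length = q.length

/-- A maximal chain of irreducible closed subsets: saturated, starting at a minimal
irreducible closed subset and ending at a maximal one. -/
def IsMaximalChain {X : Type*} [TopologicalSpace X]
    (p : LTSeries (IrreducibleCloseds X)) : Prop :=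
  IsSaturatedChain p ∧ IsMin p.head ∧ IsMax p.last

/-- The codimension `codim(Y, Z)`: the supremum of lengths of chains of irreducible
closed subsets from `Y` to `Z`. -/
noncomputable def relCodim {X : Type*} [TopologicalSpace X]
    (Y Z : IrreducibleCloseds X) : ℕ∞ :=
  ⨆ p : {p : LTSeries (IrreducibleCloseds X) // p.head = Y ∧ p.last = Z},
    (p.1.length : ℕ∞)

/-- The dimension of the irreducible closed subset `Y`: the supremum of lengths of
chains of irreducible closed subsets contained in `Y`. -/
noncomputable def chainDim {X : Type*} [TopologicalSpace X]
    (Y : IrreducibleCloseds X) : ℕ∞ :=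
  ⨆ p : {p : LTSeries (IrreducibleCloseds X) // p.last ≤ Y}, (p.1.length : ℕ∞)

/-- The dimension of `X`: the supremum of lengths of chains of irreducible closed
subsets of `X`. -/
noncomputable def spaceDim (X : Type*) [TopologicalSpace X] : ℕ∞ :=
  ⨆ p : LTSeries (IrreducibleCloseds X), (p.length : ℕ∞)

/-- The codimension of `Y` in the ambient space: the supremum of lengths of chains of
irreducible closed subsets starting at `Y`. -/
noncomputable def codimAbove {X : Type*} [TopologicalSpace X]
    (Y : IrreducibleCloseds X) : ℕ∞ :=
  ⨆ p : {p : LTSeries (IrreducibleCloseds X) // p.head = Y}, (p.1.length : ℕ∞)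

/-- A topological space is equicodimensional if all minimal irreducible closed subsets
have the same codimension. -/
def IsEquicodim (X : Type*) [TopologicalSpace X] : Prop :=
  ∀ Y Y' : IrreducibleCloseds X, IsMin Y → IsMin Y' → codimAbove Y = codimAbove Y'

/-!
Extending a saturated chain from a minimal element to `Y` by a longest chain starting at `Y`
gives a maximal chain, whose length is fixed; so all saturated chains from minimal elements to
`Y` have the same length. A longest chain ending at `Y` is one of them, so this common length is
the height of `Y`, i.e. `dim Y`. A longest chain from `Y₀` to `Y` is saturated, hence
`codim(Y₀, Y) = dim Y`.
-/

namespace RelSeries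
variable {α : Type*} {r : SetRel α α}

@[simp]
lemma head_insertNth (p : RelSeries r) (i : Fin p.length) (a : α) (h₁ : (p i.castSucc, a) ∈ r)
    (h₂ : (a, p i.succ) ∈ r) : (p.insertNth i a h₁ h₂).head = p.head := by
  change (Fin.castSucc i.succ).insertNth (α := fun _ ↦ α) a p 0 = p 0
  rw [Fin.insertNth_apply_below (by simp [Fin.lt_def])]
  rfl

@[simp]
lemma last_insertNth (p : RelSeries r) (i : Fin p.length) (a : α) (h₁ : (p i.castSucc, a) ∈ r)
    (h₂ : (a, p i.succ) ∈ r) : (p.insertNth i a h₁ h₂).last = p.last := by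
  change (Fin.castSucc i.succ).insertNth (α := fun _ ↦ α) a p (Fin.last _) = p (Fin.last _)
  rw [Fin.insertNth_apply_above (by simp [Fin.lt_def])]
  simp only [eq_rec_constant]
  rfl

end RelSeries

namespace LTSeries
variable {α : Type*} [PartialOrder α]

def IsSaturated (p : LTSeries α) : Prop :=
  ∀ i : Fin p.length, p i.castSucc ⋖ p i.succ

def IsMaximal (p : LTSeries α) : Prop :=
  p.IsSaturated ∧ IsMin p.head ∧ IsMax p.last

lemma isSaturated_of_forall_length_le {p : LTSeries α}
    (h : ∀ q : LTSeries α, q.head = p.head → q.last = p.last → q.length ≤ p.length) :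
    p.IsSaturated := fun i ↦ by
  refine ⟨p.step i, fun c hc₁ hc₂ ↦ ?_⟩
  simpa using h (p.insertNth i c hc₁ hc₂) (by simp) (by simp)

lemma IsSaturated.smash {p q : LTSeries α} (h : p.last = q.head) (hp : p.IsSaturated)
    (hq : q.IsSaturated) : IsSaturated (p.smash q h) := by
  refine Fin.addCases (fun j ↦ ?_) (fun j ↦ ?_)
  · convert hp j using 1
    exacts [RelSeries.smash_castAdd h j, RelSeries.smash_succ_castAdd h j]
  · convert hq j using 1
    exacts [RelSeries.smash_natAdd h j, RelSeries.smash_succ_natAdd h j]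

lemma isSaturated_of_length_eq_height {p : LTSeries α} (h : (p.length : ℕ∞) = height p.last) :
    p.IsSaturated :=
  isSaturated_of_forall_length_le fun q _ hq ↦ by
    exact_mod_cast h ▸ hq ▸ length_le_height_last

lemma isSaturated_of_length_eq_coheight {p : LTSeries α}
    (h : (p.length : ℕ∞) = coheight p.head) : p.IsSaturated :=
  isSaturated_of_forall_length_le fun q hq _ ↦ by
    exact_mod_cast h ▸ hq ▸ length_le_coheight_head

lemma isMin_head_of_length_eq_height {p : LTSeries α} (h : (p.length : ℕ∞) = height p.last) :
    IsMin p.head := by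
  refine fun a ha ↦ by_contra fun hna ↦ ?_
  have := length_le_height_last (p := p.cons a (lt_of_le_not_ge ha hna))
  simp only [RelSeries.cons_length, RelSeries.last_cons, ← h] at this
  norm_cast at this
  omega

lemma isMax_last_of_length_eq_coheight {p : LTSeries α}
    (h : (p.length : ℕ∞) = coheight p.head) : IsMax p.last := by
  refine fun a ha ↦ by_contra fun hna ↦ ?_
  have := length_le_coheight_head (p := p.snoc a (lt_of_le_not_ge ha hna))
  simp only [RelSeries.snoc_length, RelSeries.head_snoc, ← h] at this
  norm_cast at this
  omega

lemma exists_head_eq_last_eq_of_le {a b : α} (hab : a ≤ b) :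
    ∃ p : LTSeries α, p.head = a ∧ p.last = b := by
  obtain rfl | hlt := hab.eq_or_lt
  · exact ⟨RelSeries.singleton _ a, rfl, rfl⟩
  · exact ⟨(RelSeries.singleton _ a).snoc b hlt, RelSeries.head_snoc _ _ _,
      RelSeries.last_snoc _ _ _⟩

section EqualLengths

variable (hmax : ∀ p q : LTSeries α, p.IsMaximal → q.IsMaximal → p.length = q.length)
include hmax

lemma length_eq_of_isSaturated_of_isMin_head {s t : LTSeries α} (hs : s.IsSaturated)
    (hs₀ : IsMin s.head) (ht : t.IsSaturated) (ht₀ : IsMin t.head) (hst : s.last = t.last)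
    (hfin : coheight s.last ≠ ⊤) : s.length = t.length := by
  obtain ⟨n, hn⟩ := ENat.ne_top_iff_exists.1 hfin
  obtain ⟨r, hr, hrn⟩ := exists_series_of_coheight_eq_coe s.last hn.symm
  have hr' : (r.length : ℕ∞) = coheight r.head := by rw [hr, hrn, hn]
  have hsr : IsMaximal (s.smash r hr.symm) :=
    ⟨hs.smash _ (isSaturated_of_length_eq_coheight hr'), by simpa using hs₀,
      by simpa using isMax_last_of_length_eq_coheight hr'⟩
  have htr : IsMaximal (t.smash r (hst ▸ hr.symm)) :=
    ⟨ht.smash _ (isSaturated_of_length_eq_coheight hr'), by simpa using ht₀,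
      by simpa using isMax_last_of_length_eq_coheight hr'⟩
  simpa using hmax _ _ hsr htr

lemma length_eq_height_of_isSaturated_of_isMin_head {s : LTSeries α} (hs : s.IsSaturated)
    (hs₀ : IsMin s.head) (hh : height s.last ≠ ⊤) (hc : coheight s.last ≠ ⊤) :
    (s.length : ℕ∞) = height s.last := by
  obtain ⟨n, hn⟩ := ENat.ne_top_iff_exists.1 hh
  obtain ⟨p, hp, hpn⟩ := exists_series_of_height_eq_coe s.last hn.symm
  have hp' : (p.length : ℕ∞) = height p.last := by rw [hp, hpn, hn]
  rw [length_eq_of_isSaturated_of_isMin_head hmax hs hs₀ (isSaturated_of_length_eq_height hp')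
    (isMin_head_of_length_eq_height hp') hp.symm hc, hp', hp]

lemma exists_head_eq_last_eq_length_eq_height {a b : α} (hab : a ≤ b) (ha : IsMin a)
    (hh : height b ≠ ⊤) (hc : coheight b ≠ ⊤) :
    ∃ p : LTSeries α, p.head = a ∧ p.last = b ∧ (p.length : ℕ∞) = height b := by
  let ι := {p : LTSeries α // p.head = a ∧ p.last = b}
  have : Nonempty ι := let ⟨p, hp⟩ := exists_head_eq_last_eq_of_le hab; ⟨⟨p, hp⟩⟩
  have hbdd : ⨆ p : ι, (p.1.length : ℕ∞) < ⊤ :=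
    (iSup_le fun p ↦ length_le_height p.2.2.le).trans_lt hh.lt_top
  obtain ⟨⟨p, hpa, hpb⟩, hp⟩ := ENat.exists_eq_iSup_of_lt_top hbdd
  have hsat : p.IsSaturated := isSaturated_of_forall_length_le fun q hqa hqb ↦ by
    have := le_iSup (fun p : ι ↦ (p.1.length : ℕ∞)) ⟨q, hqa.trans hpa, hqb.trans hpb⟩
    rw [← hp] at this
    exact_mod_cast this
  refine ⟨p, hpa, hpb, ?_⟩
  subst hpa hpb
  exact length_eq_height_of_isSaturated_of_isMin_head hmax hsat ha hh hc

end EqualLengths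

end LTSeries

section IrreducibleCloseds

variable {X : Type*} [TopologicalSpace X]

lemma chainDim_eq_height (Y : IrreducibleCloseds X) : chainDim Y = height Y := by
  rw [chainDim, height, iSup_subtype']

lemma height_le_spaceDim (Y : IrreducibleCloseds X) : height Y ≤ spaceDim X :=
  height_le_iff.2 fun p _ ↦ le_iSup (fun p : LTSeries _ ↦ (p.length : ℕ∞)) p

lemma coheight_le_spaceDim (Y : IrreducibleCloseds X) : coheight Y ≤ spaceDim X :=
  coheight_le_iff.2 fun p _ ↦ le_iSup (fun p : LTSeries _ ↦ (p.length : ℕ∞)) p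

end IrreducibleCloseds

theorem equicodim_of_irreducible_closed_subset_general (X : Type*) [TopologicalSpace X]
    (hfin : spaceDim X ≠ ⊤)
    (hmax : ∀ p q : LTSeries (IrreducibleCloseds X),
      IsMaximalChain p → IsMaximalChain q → p.length = q.length) :
    ∀ Y Y₀ : IrreducibleCloseds X, Y₀ ≤ Y → IsMin Y₀ → relCodim Y₀ Y = chainDim Y := by
  intro Y Y₀ hY₀ hmin
  have hh : height Y ≠ ⊤ := ne_top_of_le_ne_top hfin (height_le_spaceDim Y)
  have hc : coheight Y ≠ ⊤ := ne_top_of_le_ne_top hfin (coheight_le_spaceDim Y)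
  obtain ⟨p, hp₀, hp, hlen⟩ :=
    LTSeries.exists_head_eq_last_eq_length_eq_height hmax hY₀ hmin hh hc
  rw [chainDim_eq_height]
  refine le_antisymm (iSup_le fun q ↦ length_le_height q.2.2.le) ?_
  exact hlen ▸ le_iSup_of_le ⟨p, hp₀, hp⟩ le_rfl

theorem equicodim_of_irreducible_closed_subset (X : Type*) [TopologicalSpace X]
    [IrreducibleSpace X] (heq : IsEquicodim X) (hfin : spaceDim X ≠ ⊤)
    (hmax : ∀ p q : LTSeries (IrreducibleCloseds X),
      IsMaximalChain p → IsMaximalChain q → p.length = q.length) :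
    ∀ Y Y₀ : IrreducibleCloseds X, Y₀ ≤ Y → IsMin Y₀ → relCodim Y₀ Y = chainDim Y :=
  equicodim_of_irreducible_closed_subset_general X hfin hmax
end
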